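/- Subsidies do not help: fix a Public-Good Congestion Game with externality l and a continuous tax function t : [0,1] → ℝ (possibly negative). Define t̃(x) = max(t(x), 0). Then for every non-increasing α : [0,1] → ℝ≥0 and every point x̄ that is an equilibrium under t̃ (α(x̄⁻) ≥ t̃(x̄) ≥ α(x̄⁺)), there exists a point x ≥ x̄ that is an equilibrium under t (α(x⁻) ≥ t(x) ≥ α(x⁺)) with SC(x) ≥ SC(x̄). Consequently PoA(l, α, t̃) ≤ PoA(l, α, t). -/

import Mathlib

open Set MeasureTheory

/-- Social cost: `SC(x) = l(x) + ∫_x^1 α(z) dz`. -/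
noncomputable def SC (l α : ℝ → ℝ) (x : ℝ) : ℝ := l x + ∫ z in x..(1:ℝ), α z

/-- Left limit value `α(x⁻) = inf {α(t) | 0 ≤ t < x}` (with convention `α(0⁻) = +∞`). -/
noncomputable def leftLimE (α : ℝ → ℝ) (x : ℝ) : EReal := ⨅ t ∈ Set.Ico (0:ℝ) x, (α t : EReal)

/-- Right limit value `α(x⁺) = sup {α(t) | x < t ≤ 1}` (with convention `α(1⁺) = -∞`). -/
noncomputable def rightLimE (α : ℝ → ℝ) (x : ℝ) : EReal := ⨆ t ∈ Set.Ioc x (1:ℝ), (α t : EReal)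

/-! If `t(x̄) > 0`, then `t̃(x̄) = t(x̄)` and `x̄` is itself an equilibrium under `t`. Otherwise
`t̃(x̄) = 0`, so `α(x̄⁺) ≤ 0` forces `α = 0` on `(x̄, 1]`; there the social cost reduces to the
non-decreasing `l`, and every `x ≥ x̄` with `t(x) ≤ 0` and `α(x⁺) ≤ t(x)` is an equilibrium.
By the intermediate value theorem such an `x` is either a zero of `t` in `[x̄, 1]` or `x = 1`. -/

def IsEquilibrium (α t : ℝ → ℝ) (x : ℝ) : Prop :=
  (t x : EReal) ≤ leftLimE α x ∧ rightLimE α x ≤ (t x : EReal)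

section Limits

variable {α : ℝ → ℝ}

theorem leftLimE_nonneg (hα : ∀ z ∈ Icc (0:ℝ) 1, 0 ≤ α z) {x : ℝ} (hx : x ≤ 1) :
    0 ≤ leftLimE α x :=
  le_iInf₂ fun z hz => EReal.coe_nonneg.mpr (hα z ⟨hz.1, (hz.2.trans_le hx).le⟩)

theorem rightLimE_le_coe_iff {x c : ℝ} :
    rightLimE α x ≤ c ↔ ∀ z ∈ Ioc x 1, α z ≤ c := by
  simp only [rightLimE, iSup₂_le_iff, EReal.coe_le_coe_iff]

theorem rightLimE_antitone : Antitone (rightLimE α) := fun _ _ hxy =>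
  biSup_mono fun _ hz => ⟨hxy.trans_lt hz.1, hz.2⟩

theorem rightLimE_one : rightLimE α 1 = ⊥ := by
  simp [rightLimE]

theorem isEquilibrium_of_nonpos (hα : ∀ z ∈ Icc (0:ℝ) 1, 0 ≤ α z) {t : ℝ → ℝ} {x : ℝ}
    (hx : x ≤ 1) (htx : t x ≤ 0) (hright : rightLimE α x ≤ t x) : IsEquilibrium α t x :=
  ⟨(EReal.coe_nonpos.mpr htx).trans (leftLimE_nonneg hα hx), hright⟩

end Limits

theorem monotoneOn_SC_of_eqOn_zero {l α : ℝ → ℝ} {a : ℝ} (hl : MonotoneOn l (Icc a 1))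
    (hα : ∀ z ∈ Ioc a 1, α z = 0) : MonotoneOn (SC l α) (Icc a 1) := by
  have hSC : EqOn (SC l α) l (Icc a 1) := fun x hx => by
    rw [SC, intervalIntegral.integral_of_le hx.2,
      setIntegral_eq_zero_of_forall_eq_zero fun z hz => hα z ⟨hx.1.trans_lt hz.1, hz.2⟩,
      add_zero]
  exact hl.congr hSC.symm

theorem ContinuousOn.exists_eq_zero_or_nonpos_right {t : ℝ → ℝ} {a b : ℝ} (hab : a ≤ b)
    (ht : ContinuousOn t (Icc a b)) (ha : t a ≤ 0) : (∃ x ∈ Icc a b, t x = 0) ∨ t b ≤ 0 := by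
  refine or_iff_not_imp_right.mpr fun hb => ?_
  exact intermediate_value_Icc hab ht ⟨ha, (not_le.mp hb).le⟩

theorem subsidies_do_not_help_general
    (l : ℝ → ℝ)
    (hl_mono : MonotoneOn l (Icc 0 1))
    (t : ℝ → ℝ) (ht_cont : ContinuousOn t (Icc 0 1))
    (tt : ℝ → ℝ) (htt : ∀ x, tt x = max (t x) 0)
    (α : ℝ → ℝ)
    (hα_nonneg : ∀ x ∈ Icc (0:ℝ) 1, 0 ≤ α x)
    (xb : ℝ) (hxb : xb ∈ Icc (0:ℝ) 1)
    (heq_left : (tt xb : EReal) ≤ leftLimE α xb)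
    (heq_right : rightLimE α xb ≤ (tt xb : EReal)) :
    ∃ x ∈ Icc (0:ℝ) 1, xb ≤ x ∧
      ((t x : EReal) ≤ leftLimE α x ∧ rightLimE α x ≤ (t x : EReal)) ∧
      SC l α xb ≤ SC l α x := by
  by_cases hpos : 0 < t xb
  · rw [htt, max_eq_left hpos.le] at heq_left heq_right
    exact ⟨xb, hxb, le_rfl, ⟨heq_left, heq_right⟩, le_rfl⟩
  rw [htt, max_eq_right (not_lt.mp hpos)] at heq_right
  have hvanish : ∀ z ∈ Ioc xb 1, α z = 0 := fun z hz =>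
    (rightLimE_le_coe_iff.mp heq_right z hz).antisymm
      (hα_nonneg z ⟨hxb.1.trans hz.1.le, hz.2⟩)
  have hsub : Icc xb 1 ⊆ Icc 0 1 := Icc_subset_Icc_left hxb.1
  have hSC := monotoneOn_SC_of_eqOn_zero (hl_mono.mono hsub) hvanish
  obtain ⟨x, hx, htx, hright⟩ : ∃ x ∈ Icc xb 1, t x ≤ 0 ∧ rightLimE α x ≤ t x := by
    rcases (ht_cont.mono hsub).exists_eq_zero_or_nonpos_right hxb.2 (not_lt.mp hpos) with
      ⟨x, hx, hzero⟩ | hone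
    · refine ⟨x, hx, hzero.le, ?_⟩
      rw [hzero]
      exact (rightLimE_antitone hx.1).trans heq_right
    · exact ⟨1, right_mem_Icc.mpr hxb.2, hone, rightLimE_one ▸ bot_le⟩
  exact ⟨x, hsub hx, hx.1, isEquilibrium_of_nonpos hα_nonneg hx.2 htx hright,
    hSC (left_mem_Icc.mpr hxb.2) hx hx.1⟩

/-- Subsidies do not help: replacing a (possibly negative) continuous tax `t`
by `t̃ = max(t, 0)`, every equilibrium of `t̃` is dominated in social cost by
some equilibrium of `t`. -/
theorem subsidies_do_not_help
    (l : ℝ → ℝ)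
    (hl_mono : MonotoneOn l (Icc 0 1))
    (hl_cont : ContinuousOn l (Icc 0 1))
    (hl_nonneg : ∀ x ∈ Icc (0:ℝ) 1, 0 ≤ l x)
    (t : ℝ → ℝ) (ht_cont : ContinuousOn t (Icc 0 1))
    (tt : ℝ → ℝ) (htt : ∀ x, tt x = max (t x) 0)
    (α : ℝ → ℝ)
    (hα_anti : AntitoneOn α (Icc 0 1))
    (hα_nonneg : ∀ x ∈ Icc (0:ℝ) 1, 0 ≤ α x)
    (xb : ℝ) (hxb : xb ∈ Icc (0:ℝ) 1)
    (heq_left : (tt xb : EReal) ≤ leftLimE α xb)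
    (heq_right : rightLimE α xb ≤ (tt xb : EReal)) :
    ∃ x ∈ Icc (0:ℝ) 1, xb ≤ x ∧
      ((t x : EReal) ≤ leftLimE α x ∧ rightLimE α x ≤ (t x : EReal)) ∧
      SC l α xb ≤ SC l α x :=
  subsidies_do_not_help_general l hl_mono t ht_cont tt htt α hα_nonneg xb hxb heq_left heq_right
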